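/- arXiv:1608.01115 — 2 statements merged into one kernel-verified Lean document; each statement's English description precedes it below -/
import Mathlib

section
/- Let α, d, δ > 0, C ∈ ℝ, l ∈ ℤ, n ∈ ℕ and Q ∈ ℝ with Q + 1 > n, and let ρ > 0 satisfy ρ δ < π/2. Set s(t) := −(i/d)(π/2 − ρδ) + t for t ∈ ℝ. Then I_{n,Q}^{l,C} = e^{−(α|l|/d)(π/(2δ) − ρ)} · ∫_{−∞}^{∞} e^{−i α |l| t/δ} · sinh(d s(t))^n / cosh(d s(t))^{Q+1+iC|l|} dt, where along the shifted line the complex powers are taken with the principal branch (this is well defined since Re cosh(d s(t)) = cosh(d t)·cos(π/2 − ρδ) > 0 for all t). -/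
/-!
Write `β = α|l|/δ`, `w = Q + 1 + iC|l|` and `c = π/2 - ρδ`. The integrand
`e^{-iβz} sinh(dz)^n / cosh(dz)^w` is holomorphic on the strip `-c/d ≤ Im z ≤ 0`, because there
`Re cosh(dz) = cosh(d Re z) cos(d Im z) ≥ cosh(d Re z) cos c > 0`; the same estimate together with
`|sinh| ≤ cosh(Re ·)`, `|e^{-iβz}| ≤ 1` and `|u^w| ≥ |u|^{Re w} e^{-π|Im w|}` bounds it on the strip
by a multiple of `e^{-(Q+1-n)d|Re z|}`. Cauchy's theorem on the rectangles `[-R, R] × [-c/d, 0]`,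
whose vertical sides vanish as `R → ∞`, moves the line of integration to `Im z = -c/d`, where the
exponential factor splits off the constant `e^{-βc/d}`.
-/

/-- I_{n,Q}^{l,C} = ∫ e^{−iα|l|s/δ} sinh(ds)^n / cosh(ds)^{Q+1+iC|l|} ds. -/
noncomputable def Iint (α d δ C : ℝ) (l : ℤ) (n : ℕ) (Q : ℝ) : ℂ :=
  ∫ s : ℝ,
    Complex.exp (-(Complex.I * (α : ℂ) * ((|l| : ℤ) : ℂ) * (s : ℂ)) / (δ : ℂ))
      * ((Real.sinh (d * s) : ℝ) : ℂ) ^ n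
      / ((Real.cosh (d * s) : ℂ) ^ (((Q : ℂ) + 1) + Complex.I * (C : ℂ) * ((|l| : ℤ) : ℂ)))

open Complex MeasureTheory Set Filter Topology
open scoped Real

theorem integrable_exp_neg_mul_abs {k : ℝ} (hk : 0 < k) :
    Integrable fun x : ℝ => Real.exp (-(k * |x|)) := by
  rw [← integrableOn_univ, ← Iic_union_Ioi (a := 0), integrableOn_union]
  constructor
  · refine (integrableOn_exp_mul_Iic hk 0).congr_fun (fun x hx => ?_) measurableSet_Iic
    rw [abs_of_nonpos hx, mul_neg, neg_neg]
  · refine (integrableOn_exp_mul_Ioi (neg_neg_of_pos hk) 0).congr_fun (fun x hx => ?_)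
      measurableSet_Ioi
    simp only [abs_of_pos (mem_Ioi.1 hx), neg_mul]

theorem tendsto_exp_neg_mul_abs_cocompact {k : ℝ} (hk : 0 < k) :
    Tendsto (fun x : ℝ => Real.exp (-(k * |x|))) (cocompact ℝ) (𝓝 0) :=
  Real.tendsto_exp_atBot.comp <| tendsto_neg_atTop_atBot.comp <|
    (tendsto_norm_cocompact_atTop (E := ℝ)).const_mul_atTop hk

theorem integral_add_mul_I_eq_of_differentiableOn_strip {f : ℂ → ℂ} {a b : ℝ} (hab : a ≤ b)
    {g : ℝ → ℝ} (hf : DifferentiableOn ℂ f (im ⁻¹' Icc a b))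
    (hfg : ∀ z ∈ im ⁻¹' Icc a b, ‖f z‖ ≤ g z.re)
    (hg : Integrable g) (hg0 : Tendsto g (cocompact ℝ) (𝓝 0)) :
    ∫ x : ℝ, f (x + a * I) = ∫ x : ℝ, f (x + b * I) := by
  have hline (y : ℝ) (hy : y ∈ Icc a b) : Integrable fun x : ℝ => f (x + y * I) :=
    hg.mono' (hf.continuousOn.comp_continuous (f := fun x : ℝ => (x : ℂ) + y * I) (by fun_prop)
      fun x => by simpa using hy).aestronglyMeasurable
      (.of_forall fun x => by simpa using hfg (x + y * I) (by simpa using hy))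
  have hvert (u : ℝ → ℝ) (hu : Tendsto u atTop (cocompact ℝ)) :
      Tendsto (fun R => ∫ y in a..b, f (u R + y * I)) atTop (𝓝 0) := by
    refine squeeze_zero_norm (fun R => ?_) (by simpa using (hg0.comp hu).mul_const (b - a))
    refine (intervalIntegral.norm_integral_le_of_norm_le_const (C := g (u R))
      fun y hy => ?_).trans_eq ?_
    · simpa using hfg (u R + y * I) (by simpa using Ioc_subset_Icc_self (uIoc_of_le hab ▸ hy))
    · rw [abs_of_nonneg (sub_nonneg.2 hab)]
  have hrect (R : ℝ) : (∫ x in -R..R, f (x + a * I)) - (∫ x in -R..R, f (x + b * I))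
      + I • (∫ y in a..b, f (R + y * I)) - I • (∫ y in a..b, f ((-R : ℝ) + y * I)) = 0 := by
    refine integral_boundary_rect_eq_zero_of_differentiableOn f ⟨-R, a⟩ ⟨R, b⟩
      (hf.mono fun z hz => ?_)
    simpa [uIcc_of_le hab] using hz.2
  have hlim := (((intervalIntegral_tendsto_integral (hline a ⟨le_rfl, hab⟩)
    tendsto_neg_atTop_atBot tendsto_id).sub (intervalIntegral_tendsto_integral
    (hline b ⟨hab, le_rfl⟩) tendsto_neg_atTop_atBot tendsto_id)).add
    ((hvert id (tendsto_id.mono_right atTop_le_cocompact)).const_smul I)).sub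
    ((hvert Neg.neg (tendsto_neg_atTop_atBot.mono_right atBot_le_cocompact)).const_smul I)
  simp only [hrect, smul_zero, add_zero, sub_zero, id] at hlim
  exact sub_eq_zero.1 (tendsto_nhds_unique tendsto_const_nhds hlim).symm

theorem Complex.cosh_re (z : ℂ) : (cosh z).re = Real.cosh z.re * Real.cos z.im := by
  conv_lhs => rw [← re_add_im z, cosh_add, cosh_mul_I, ← ofReal_cosh, ← ofReal_cos]
  simp [sinh_mul_I, ← ofReal_sinh, ← ofReal_sin, cos_ofReal_re]

theorem Complex.norm_sinh_le_cosh_re (z : ℂ) : ‖sinh z‖ ≤ Real.cosh z.re := by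
  rw [sinh, Real.cosh_eq, norm_div, RCLike.norm_ofNat]
  gcongr
  exact (norm_sub_le _ _).trans_eq (by simp [norm_exp])

theorem Complex.real_cosh_mul_cos_le_cosh_re {z : ℂ} {c : ℝ} (hz : |z.im| ≤ c) (hc : c ≤ π) :
    Real.cosh z.re * Real.cos c ≤ (cosh z).re := by
  rw [cosh_re, ← Real.cos_abs z.im]
  gcongr
  exact Real.cos_le_cos_of_nonneg_of_le_pi (abs_nonneg _) hc hz

theorem Complex.norm_rpow_re_mul_exp_le_norm_cpow {z : ℂ} (hz : z ≠ 0) (w : ℂ) :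
    ‖z‖ ^ w.re * Real.exp (-(π * |w.im|)) ≤ ‖z ^ w‖ := by
  rw [norm_cpow_of_ne_zero hz, div_eq_mul_inv, ← Real.exp_neg]
  gcongr ‖z‖ ^ w.re * Real.exp ?_
  rw [neg_le_neg_iff]
  calc arg z * w.im ≤ |arg z| * |w.im| := (le_abs_self _).trans (abs_mul _ _).le
    _ ≤ π * |w.im| := by gcongr; exact abs_arg_le_pi z

theorem Real.cosh_rpow_le {r : ℝ} (hr : r ≤ 0) (x : ℝ) :
    Real.cosh x ^ r ≤ 2 ^ (-r) * Real.exp (r * |x|) := by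
  have hcosh : Real.exp |x| / 2 ≤ Real.cosh x := by
    rw [Real.cosh_eq]; gcongr; exact Real.exp_abs_le x
  calc Real.cosh x ^ r ≤ (Real.exp |x| / 2) ^ r :=
        Real.rpow_le_rpow_of_nonpos (by positivity) hcosh hr
    _ = 2 ^ (-r) * Real.exp (r * |x|) := by
      rw [Real.div_rpow (by positivity) zero_le_two, ← Real.exp_mul, Real.rpow_neg zero_le_two,
        mul_comm |x|]
      ring

theorem Complex.cosh_re_pos {z : ℂ} {c : ℝ} (hz : |z.im| ≤ c) (hc : c < π / 2) :
    0 < (cosh z).re := by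
  have hcos : 0 < Real.cos c :=
    Real.cos_pos_of_mem_Ioo ⟨by linarith [abs_nonneg z.im, Real.pi_pos], hc⟩
  exact (mul_pos (Real.cosh_pos _) hcos).trans_le
    (real_cosh_mul_cos_le_cosh_re hz (by linarith [Real.pi_pos]))

noncomputable def sinhCoshIntegrand (β d : ℝ) (n : ℕ) (w z : ℂ) : ℂ :=
  cexp (-(I * β * z)) * sinh (d * z) ^ n / cosh (d * z) ^ w

section sinhCoshIntegrand

variable {β d c : ℝ} {n : ℕ} {w z : ℂ}

theorem sinhCoshIntegrand_add_mul_I (x y : ℝ) :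
    sinhCoshIntegrand β d n w (x + y * I) = cexp (β * y)
      * (cexp (-(I * β * x)) * sinh (d * (x + y * I)) ^ n / cosh (d * (x + y * I)) ^ w) := by
  rw [sinhCoshIntegrand, mul_div_assoc, mul_div_assoc, ← mul_assoc, ← Complex.exp_add]
  congr 2
  linear_combination (-(β : ℂ) * y) * I_sq

theorem norm_cexp_neg_I_mul_le_one (hβ : 0 ≤ β) (hz : z.im ≤ 0) : ‖cexp (-(I * β * z))‖ ≤ 1 := by
  rw [norm_exp, Real.exp_le_one_iff]
  simpa using mul_nonpos_of_nonneg_of_nonpos hβ hz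

theorem abs_im_ofReal_mul_le (hd : 0 < d) (hz : z.im ∈ Icc (-(c / d)) 0) : |(d * z).im| ≤ c := by
  rw [im_ofReal_mul, abs_of_nonpos (mul_nonpos_of_nonneg_of_nonpos hd.le hz.2), neg_le]
  simpa [mul_div_cancel₀ _ hd.ne'] using mul_le_mul_of_nonneg_left hz.1 hd.le

theorem differentiableAt_sinhCoshIntegrand (hz : 0 < (cosh (d * z)).re) :
    DifferentiableAt ℂ (sinhCoshIntegrand β d n w) z := by
  have hcosh : DifferentiableAt ℂ (fun z : ℂ => cosh (d * z) ^ w) z :=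
    (by fun_prop : DifferentiableAt ℂ (fun z : ℂ => cosh (d * z)) z).cpow_const (Or.inl hz)
  refine (DifferentiableAt.mul (by fun_prop) (by fun_prop)).div hcosh ?_
  exact cpow_ne_zero_iff.2 (Or.inl fun h => by simp [h] at hz)

theorem differentiableOn_sinhCoshIntegrand (hd : 0 < d) (hc : c < π / 2) :
    DifferentiableOn ℂ (sinhCoshIntegrand β d n w) (im ⁻¹' Icc (-(c / d)) 0) := fun _ hz =>
  (differentiableAt_sinhCoshIntegrand
    (cosh_re_pos (abs_im_ofReal_mul_le hd hz) hc)).differentiableWithinAt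

theorem norm_sinhCoshIntegrand_le (hβ : 0 ≤ β) (hd : 0 < d) (hc : c < π / 2)
    (hw : (n : ℝ) ≤ w.re) (hz : z.im ∈ Icc (-(c / d)) 0) :
    ‖sinhCoshIntegrand β d n w z‖ ≤ Real.exp (π * |w.im|) / Real.cos c ^ w.re
      * 2 ^ (w.re - n) * Real.exp (-((w.re - n) * d * |z.re|)) := by
  set X := Real.cosh (d * z.re)
  have him := abs_im_ofReal_mul_le hd hz
  have hcos : 0 < Real.cos c :=
    Real.cos_pos_of_mem_Ioo ⟨by linarith [abs_nonneg (d * z).im, Real.pi_pos], hc⟩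
  have hne : cosh (d * z) ≠ 0 := fun h => by simpa [h] using cosh_re_pos him hc
  have hlow : X * Real.cos c ≤ ‖cosh (d * z)‖ := by
    simpa [X] using (real_cosh_mul_cos_le_cosh_re him (by linarith [Real.pi_pos])).trans
      (re_le_norm _)
  have hsinh : ‖sinh (d * z)‖ ≤ X := by simpa [X] using norm_sinh_le_cosh_re (d * z)
  have hX : 0 < X := Real.cosh_pos _
  have hdecay : X ^ ((n : ℝ) - w.re) ≤ 2 ^ (w.re - n) * Real.exp ((n - w.re) * |d * z.re|) := by
    simpa only [neg_sub] using Real.cosh_rpow_le (sub_nonpos.2 hw) (d * z.re)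
  clear_value X
  calc ‖sinhCoshIntegrand β d n w z‖
      = ‖cexp (-(I * β * z))‖ * ‖sinh (d * z)‖ ^ n / ‖cosh (d * z) ^ w‖ := by
        simp only [sinhCoshIntegrand, norm_div, norm_mul, norm_pow]
    _ ≤ 1 * X ^ n / ((X * Real.cos c) ^ w.re * Real.exp (-(π * |w.im|))) := by
        gcongr
        · exact norm_cexp_neg_I_mul_le_one hβ hz.2
        · exact (mul_le_mul_of_nonneg_right (Real.rpow_le_rpow (by positivity) hlow
            (by linarith [n.cast_nonneg (α := ℝ)])) (Real.exp_pos _).le).trans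
            (norm_rpow_re_mul_exp_le_norm_cpow hne w)
    _ = Real.exp (π * |w.im|) / Real.cos c ^ w.re * X ^ ((n : ℝ) - w.re) := by
        rw [Real.mul_rpow hX.le hcos.le, Real.exp_neg, Real.rpow_sub hX, Real.rpow_natCast]
        field_simp
    _ ≤ Real.exp (π * |w.im|) / Real.cos c ^ w.re
          * (2 ^ (w.re - n) * Real.exp (((n : ℝ) - w.re) * |d * z.re|)) := by
        gcongr
    _ = _ := by
        rw [abs_mul, abs_of_pos hd]
        ring_nf

theorem integral_sinhCoshIntegrand_eq_integral_add_mul_I (hβ : 0 ≤ β) (hd : 0 < d) (hc₀ : 0 ≤ c)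
    (hc : c < π / 2) (hw : (n : ℝ) < w.re) :
    ∫ t : ℝ, sinhCoshIntegrand β d n w t
      = ∫ t : ℝ, sinhCoshIntegrand β d n w (t + (-(c / d) : ℝ) * I) := by
  have hk : 0 < (w.re - n) * d := mul_pos (sub_pos.2 hw) hd
  obtain ⟨M, hM⟩ : ∃ M, ∀ z ∈ im ⁻¹' Icc (-(c / d)) 0,
      ‖sinhCoshIntegrand β d n w z‖ ≤ M * Real.exp (-((w.re - n) * d * |z.re|)) :=
    ⟨_, fun z hz => norm_sinhCoshIntegrand_le hβ hd hc hw.le hz⟩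
  have hshift := integral_add_mul_I_eq_of_differentiableOn_strip
    (neg_nonpos.2 (div_nonneg hc₀ hd.le)) (differentiableOn_sinhCoshIntegrand hd hc) hM
    ((integrable_exp_neg_mul_abs hk).const_mul M)
    (by simpa only [mul_zero] using (tendsto_exp_neg_mul_abs_cocompact hk).const_mul M)
  simpa only [ofReal_zero, zero_mul, add_zero] using hshift.symm

end sinhCoshIntegrand

theorem stmt6 (α d δ C ρ : ℝ) (hα : 0 < α) (hd : 0 < d) (hδ : 0 < δ)
    (l : ℤ) (n : ℕ) (Q : ℝ) (hQn : (n : ℝ) < Q + 1)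
    (hρ : 0 < ρ) (hρδ : ρ * δ < Real.pi / 2) :
    Iint α d δ C l n Q
      = Complex.exp (-(((α * ((|l| : ℤ) : ℝ) / d) * (Real.pi / (2 * δ) - ρ) : ℝ) : ℂ))
          * ∫ t : ℝ,
              Complex.exp (-(Complex.I * (α : ℂ) * ((|l| : ℤ) : ℂ) * (t : ℂ)) / (δ : ℂ))
                * (Complex.sinh ((d : ℂ) *
                      (-(Complex.I / (d : ℂ)) * ((Real.pi / 2 - ρ * δ : ℝ) : ℂ) + (t : ℂ)))) ^ n
                / ((Complex.cosh ((d : ℂ) *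
                      (-(Complex.I / (d : ℂ)) * ((Real.pi / 2 - ρ * δ : ℝ) : ℂ) + (t : ℂ))))
                    ^ (((Q : ℂ) + 1) + Complex.I * (C : ℂ) * ((|l| : ℤ) : ℂ))) := by
  set c : ℝ := π / 2 - ρ * δ
  set w : ℂ := (Q : ℂ) + 1 + I * C * ((|l| : ℤ) : ℂ)
  set β : ℝ := α * ((|l| : ℤ) : ℝ) / δ
  have hd' : (d : ℂ) ≠ 0 := ofReal_ne_zero.2 hd.ne'
  have hδ' : (δ : ℂ) ≠ 0 := ofReal_ne_zero.2 hδ.ne'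
  have hphase (z : ℂ) : -(I * α * ((|l| : ℤ) : ℂ) * z) / δ = -(I * β * z) := by
    simp only [β, ofReal_div, ofReal_mul, ofReal_intCast]
    field_simp
  have harg (t : ℝ) : (d : ℂ) * (t + ((-(c / d) : ℝ) : ℂ) * I) = d * (-(I / d) * c + t) := by
    push_cast
    field_simp
    ring
  have hconst : (β : ℂ) * ((-(c / d) : ℝ) : ℂ)
      = -(((α * ((|l| : ℤ) : ℝ) / d) * (π / (2 * δ) - ρ) : ℝ) : ℂ) := by
    simp only [β, c]
    push_cast
    field_simp
  calc Iint α d δ C l n Q = ∫ t : ℝ, sinhCoshIntegrand β d n w t := by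
        simp [Iint, sinhCoshIntegrand, hphase, w]
    _ = ∫ t : ℝ, sinhCoshIntegrand β d n w (t + (-(c / d) : ℝ) * I) :=
        integral_sinhCoshIntegrand_eq_integral_add_mul_I (by positivity) hd (sub_pos.2 hρδ).le
          (sub_lt_self _ (mul_pos hρ hδ)) (by simpa [w] using hQn)
    _ = _ := by
        simp_rw [sinhCoshIntegrand_add_mul_I, harg, hphase, hconst]
        rw [integral_const_mul]
end

section
/- Let α, δ, d > 0, c ∈ ℝ, T₀ ∈ ℝ, let n be a real number with n ≥ 1, and let l ∈ ℤ. There exists a constant M > 0, depending only on n, d and T₀ (in particular independent of α, c, δ, l and of φ), such that the following holds: for every continuous φ : (−∞, T₀] → ℂ and every N ≥ 0 with |φ(w)| ≤ N·cosh(d w)^{−n} for all w ≤ T₀, the function y(v) := cosh(d v)^{2/d} · ∫_{−∞}^{v} e^{−i l (η(w) − η(v))/δ} · φ(w) · cosh(d w)^{−2/d} dw is well defined for all v ≤ T₀ (the integral converges absolutely) and satisfies |y(v)| ≤ M·N·cosh(d v)^{−(n−1)} for all v ≤ T₀. -/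
/-!
The kernel has modulus one, so the integrand is bounded by
`N cosh(dw)^(-s) ≤ N 2^s e^(s d w)` with `s = n + 2/d`, whose integral over `(-∞, v]` is explicit.
Multiplying by `cosh(dv)^(2/d) = cosh(dv)^p · cosh(dv)^(-(n-1))`, `p = s - 1 ≥ 0`, it remains to
bound `cosh(x)^p e^((p+1)x)` for `x ≤ d T₀`, which follows from `cosh x ≤ e^(2 max(dT₀, 0)) e^(-x)`
there.
-/

open MeasureTheory

/-- η(w) = αw + (δc/d)·log(cosh(dw)). -/
noncomputable def etaF (α δ c d : ℝ) (w : ℝ) : ℝ :=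
  α * w + (δ * c / d) * Real.log (Real.cosh (d * w))

open Real Set

namespace Real

lemma exp_neg_div_two_le_cosh (x : ℝ) : exp (-x) / 2 ≤ cosh x := by
  rw [cosh_eq]
  linarith [exp_pos x]

lemma cosh_rpow_neg_le {s : ℝ} (hs : 0 ≤ s) (x : ℝ) :
    cosh x ^ (-s) ≤ 2 ^ s * exp (s * x) :=
  calc cosh x ^ (-s) ≤ (exp (-x) / 2) ^ (-s) :=
        rpow_le_rpow_of_nonpos (by positivity) (exp_neg_div_two_le_cosh x) (neg_nonpos.2 hs)
    _ = 2 ^ s * exp (s * x) := by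
        rw [div_rpow (exp_pos _).le zero_le_two, ← exp_mul, rpow_neg zero_le_two, div_inv_eq_mul]
        ring_nf

lemma cosh_le_exp_two_mul_max_sub {a x : ℝ} (hx : x ≤ a) : cosh x ≤ exp (2 * max a 0 - x) := by
  have h₁ : exp x ≤ exp (2 * max a 0 - x) := exp_le_exp.2 (by linarith [le_max_left a 0])
  have h₂ : exp (-x) ≤ exp (2 * max a 0 - x) := exp_le_exp.2 (by linarith [le_max_right a 0])
  rw [cosh_eq]
  linarith

lemma cosh_rpow_mul_exp_le {a x p : ℝ} (hp : 0 ≤ p) (hx : x ≤ a) :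
    cosh x ^ p * exp ((p + 1) * x) ≤ exp ((2 * p + 1) * max a 0) :=
  calc cosh x ^ p * exp ((p + 1) * x)
      ≤ exp (2 * max a 0 - x) ^ p * exp ((p + 1) * x) := by
        gcongr
        exact cosh_le_exp_two_mul_max_sub hx
    _ = exp (2 * p * max a 0 + x) := by
        rw [← exp_mul, ← exp_add]
        ring_nf
    _ ≤ exp ((2 * p + 1) * max a 0) := exp_le_exp.2 (by linarith [le_max_left a 0])

lemma cosh_rpow_add_mul_exp_le {a x p m : ℝ} (hp : 0 ≤ p) (hx : x ≤ a) :
    cosh x ^ (p + m) * exp ((p + 1) * x) ≤ exp ((2 * p + 1) * max a 0) * cosh x ^ m := by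
  rw [rpow_add (cosh_pos x), mul_right_comm]
  exact mul_le_mul_of_nonneg_right (cosh_rpow_mul_exp_le hp hx) (rpow_nonneg (cosh_pos x).le _)

end Real

section ExpDominated

variable {E : Type*} [NormedAddCommGroup E] {f : ℝ → E} {b C v : ℝ}

lemma integrableOn_Iic_of_norm_le_exp (hb : 0 < b)
    (hf : AEStronglyMeasurable f (volume.restrict (Iic v)))
    (hbound : ∀ w ≤ v, ‖f w‖ ≤ C * exp (b * w)) : IntegrableOn f (Iic v) :=
  ((integrableOn_exp_mul_Iic hb v).const_mul C).mono' hf <|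
    (ae_restrict_mem measurableSet_Iic).mono hbound

lemma norm_setIntegral_Iic_le_of_norm_le_exp [NormedSpace ℝ E] (hb : 0 < b)
    (hbound : ∀ w ≤ v, ‖f w‖ ≤ C * exp (b * w)) :
    ‖∫ w in Iic v, f w‖ ≤ C * exp (b * v) / b :=
  calc ‖∫ w in Iic v, f w‖ ≤ ∫ w in Iic v, C * exp (b * w) :=
        norm_integral_le_of_norm_le ((integrableOn_exp_mul_Iic hb v).const_mul C)
          ((ae_restrict_mem measurableSet_Iic).mono hbound)
    _ = C * exp (b * v) / b := by
        rw [integral_const_mul, integral_exp_mul_Iic hb, mul_div_assoc]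

end ExpDominated

lemma norm_mul_div_cosh_rpow_le {x q n N : ℝ} {k z : ℂ} (hnq : 0 ≤ n + q) (hN : 0 ≤ N)
    (hk : ‖k‖ = 1) (hz : ‖z‖ ≤ N * cosh x ^ (-n)) :
    ‖k * z / ((cosh x ^ q : ℝ) : ℂ)‖ ≤ N * 2 ^ (n + q) * exp ((n + q) * x) := by
  have hcosh := cosh_pos x
  rw [norm_div, norm_mul, hk, one_mul, Complex.norm_real, norm_of_nonneg (by positivity)]
  calc ‖z‖ / cosh x ^ q ≤ N * cosh x ^ (-n) / cosh x ^ q := by gcongr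
    _ = N * cosh x ^ (-(n + q)) := by
        rw [mul_div_assoc, ← rpow_sub hcosh]
        ring_nf
    _ ≤ N * (2 ^ (n + q) * exp ((n + q) * x)) := by gcongr; exact cosh_rpow_neg_le hnq x
    _ = N * 2 ^ (n + q) * exp ((n + q) * x) := by ring

@[fun_prop]
lemma continuous_etaF (α δ c d : ℝ) : Continuous (etaF α δ c d) := by
  unfold etaF
  exact (continuous_const.mul continuous_id).add <| continuous_const.mul <|
    (continuous_cosh.comp (continuous_const.mul continuous_id)).log fun w => (cosh_pos _).ne'

noncomputable def oscillatoryKernel (α δ c d : ℝ) (l : ℤ) (v w : ℝ) : ℂ :=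
  Complex.exp (-Complex.I * (l : ℂ) * (((etaF α δ c d w - etaF α δ c d v) / δ : ℝ) : ℂ))

lemma norm_oscillatoryKernel (α δ c d : ℝ) (l : ℤ) (v w : ℝ) :
    ‖oscillatoryKernel α δ c d l v w‖ = 1 := by
  rw [oscillatoryKernel, Complex.norm_exp]
  simp

lemma continuous_oscillatoryKernel (α δ c d : ℝ) (l : ℤ) (v : ℝ) :
    Continuous (oscillatoryKernel α δ c d l v) := by
  unfold oscillatoryKernel
  fun_prop

section WeightedIntegral

variable {d n N v : ℝ} {k φ : ℝ → ℂ}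

lemma norm_mul_div_cosh_rpow_le_exp (hd : 0 < d) (hn : 0 ≤ n) (hN : 0 ≤ N)
    (hk : ∀ w, ‖k w‖ = 1) (hφ : ∀ w ≤ v, ‖φ w‖ ≤ N * cosh (d * w) ^ (-n)) (w : ℝ) (hw : w ≤ v) :
    ‖k w * φ w / ((cosh (d * w) ^ (2 / d) : ℝ) : ℂ)‖ ≤
      N * 2 ^ (n + 2 / d) * exp ((n + 2 / d) * d * w) := by
  rw [mul_assoc (n + 2 / d)]
  exact norm_mul_div_cosh_rpow_le (by positivity) hN (hk w) (hφ w hw)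

lemma integrableOn_Iic_mul_div_cosh_rpow (hd : 0 < d) (hn : 0 ≤ n) (hN : 0 ≤ N)
    (hk : ∀ w, ‖k w‖ = 1) (hkc : ContinuousOn k (Iic v)) (hφc : ContinuousOn φ (Iic v))
    (hφ : ∀ w ≤ v, ‖φ w‖ ≤ N * cosh (d * w) ^ (-n)) :
    IntegrableOn (fun w => k w * φ w / ((cosh (d * w) ^ (2 / d) : ℝ) : ℂ)) (Iic v) := by
  have hcont : ContinuousOn (fun w => k w * φ w / ((cosh (d * w) ^ (2 / d) : ℝ) : ℂ)) (Iic v) :=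
    (hkc.mul hφc).div (Complex.continuous_ofReal.comp <|
        (continuous_cosh.comp (continuous_const.mul continuous_id)).rpow_const
          fun _ => Or.inl (cosh_pos _).ne').continuousOn fun w _ =>
      Complex.ofReal_ne_zero.2 (rpow_pos_of_pos (cosh_pos _) _).ne'
  exact integrableOn_Iic_of_norm_le_exp (by positivity)
    (hcont.aestronglyMeasurable measurableSet_Iic) (norm_mul_div_cosh_rpow_le_exp hd hn hN hk hφ)

lemma norm_cosh_rpow_smul_integral_le {T₀ : ℝ} (hd : 0 < d) (hn : 1 ≤ n) (hN : 0 ≤ N)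
    (hk : ∀ w, ‖k w‖ = 1) (hφ : ∀ w ≤ v, ‖φ w‖ ≤ N * cosh (d * w) ^ (-n)) (hv : v ≤ T₀) :
    ‖cosh (d * v) ^ (2 / d) • ∫ w in Iic v, k w * φ w / ((cosh (d * w) ^ (2 / d) : ℝ) : ℂ)‖ ≤
      2 ^ (n + 2 / d) * exp ((2 * (n + 2 / d - 1) + 1) * max (d * T₀) 0) / ((n + 2 / d) * d) *
        N * cosh (d * v) ^ (-(n - 1)) := by
  have hs : 0 < n + 2 / d := by positivity
  have hp : 0 ≤ n + 2 / d - 1 := by linarith [div_pos two_pos hd]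
  have hintegral := norm_setIntegral_Iic_le_of_norm_le_exp (mul_pos hs hd)
    (norm_mul_div_cosh_rpow_le_exp hd (by linarith) hN hk hφ)
  rw [norm_smul, norm_of_nonneg (by positivity)]
  calc cosh (d * v) ^ (2 / d) * ‖∫ w in Iic v, k w * φ w / ((cosh (d * w) ^ (2 / d) : ℝ) : ℂ)‖
      ≤ cosh (d * v) ^ (2 / d) * (N * 2 ^ (n + 2 / d) * exp ((n + 2 / d) * d * v) /
          ((n + 2 / d) * d)) := by gcongr
    _ = N * 2 ^ (n + 2 / d) / ((n + 2 / d) * d) * (cosh (d * v) ^ (n + 2 / d - 1 + -(n - 1)) *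
          exp ((n + 2 / d - 1 + 1) * (d * v))) := by
        rw [show n + 2 / d - 1 + -(n - 1) = 2 / d by ring, sub_add_cancel]
        ring_nf
    _ ≤ N * 2 ^ (n + 2 / d) / ((n + 2 / d) * d) *
          (exp ((2 * (n + 2 / d - 1) + 1) * max (d * T₀) 0) * cosh (d * v) ^ (-(n - 1))) := by
        gcongr ?_ * ?_
        exact cosh_rpow_add_mul_exp_le hp (mul_le_mul_of_nonneg_left hv hd.le)
    _ = _ := by ring

end WeightedIntegral

theorem stmt18 (d T₀ n : ℝ) (hd : 0 < d) (hn : 1 ≤ n) :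
    ∃ M > (0 : ℝ), ∀ α δ c : ℝ, 0 < α → 0 < δ →
      ∀ l : ℤ, ∀ φ : ℝ → ℂ, ContinuousOn φ (Set.Iic T₀) →
      ∀ N : ℝ, 0 ≤ N →
        (∀ w : ℝ, w ≤ T₀ → ‖φ w‖ ≤ N * Real.cosh (d * w) ^ (-n)) →
        ∀ v : ℝ, v ≤ T₀ →
          IntegrableOn (fun w : ℝ =>
            Complex.exp (-Complex.I * (l : ℂ)
                * (((etaF α δ c d w - etaF α δ c d v) / δ : ℝ) : ℂ))
              * φ w / ((Real.cosh (d * w) ^ ((2 : ℝ) / d) : ℝ) : ℂ)) (Set.Iic v) ∧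
          ‖(Real.cosh (d * v) ^ ((2 : ℝ) / d)) •
              ∫ w in Set.Iic v,
                Complex.exp (-Complex.I * (l : ℂ)
                    * (((etaF α δ c d w - etaF α δ c d v) / δ : ℝ) : ℂ))
                  * φ w / ((Real.cosh (d * w) ^ ((2 : ℝ) / d) : ℝ) : ℂ)‖
            ≤ M * N * Real.cosh (d * v) ^ (-(n - 1)) := by
  refine ⟨2 ^ (n + 2 / d) * exp ((2 * (n + 2 / d - 1) + 1) * max (d * T₀) 0) / ((n + 2 / d) * d),
    by positivity, fun α δ c _ _ l φ hφc N hN hφ v hv => ?_⟩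
  have hφv : ∀ w ≤ v, ‖φ w‖ ≤ N * cosh (d * w) ^ (-n) := fun w hw => hφ w (hw.trans hv)
  have hk := norm_oscillatoryKernel α δ c d l v
  exact ⟨integrableOn_Iic_mul_div_cosh_rpow hd (by linarith) hN hk
      (continuous_oscillatoryKernel α δ c d l v).continuousOn (hφc.mono (Iic_subset_Iic.2 hv)) hφv,
    norm_cosh_rpow_smul_integral_le hd hn hN hk hφv hv⟩
end
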